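/- Let p be a probability vector in ℝ^r with strictly positive entries, D = diag(p), and Σ = D − p pᵀ. Then the matrix Σ^{1/2} D^{−1} Σ^{1/2} is symmetric and idempotent, i.e., it is an orthogonal projector, and it projects onto the orthogonal complement of 𝟏 = (1,...,1)ᵀ. -/
import Mathlib


open Matrix

lemma aux_mul_vecMulVec {r : ℕ} (A : Matrix (Fin r) (Fin r) ℝ) (u v : Fin r → ℝ) :
    A * vecMulVec u v = vecMulVec (A *ᵥ u) v := by
  ext i j
  simp only [mul_apply, vecMulVec_apply, mulVec, dotProduct, Finset.mul_sum, Finset.sum_mul]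
  exact Finset.sum_congr rfl fun _ _ => by ring

lemma aux_diagonal_mul_vecMulVec {r : ℕ} (d u v : Fin r → ℝ) :
    diagonal d * vecMulVec u v = vecMulVec (fun i => d i * u i) v := by
  ext i j
  simp [mul_apply, vecMulVec_apply, diagonal, Finset.sum_ite_eq, mul_assoc]

theorem sqrt_sigma_projector
    (r : ℕ) (hr : 1 ≤ r) (p : Fin r → ℝ) (hp : ∀ j, 0 < p j) (hsum : ∑ j, p j = 1)
    (S : Matrix (Fin r) (Fin r) ℝ)
    (hSsq : S * S = Matrix.diagonal p - Matrix.vecMulVec p p)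
    (hSpsd : S.PosSemidef) :
    letI M := S * Matrix.diagonal (fun j => (p j)⁻¹) * S
    M.IsSymm ∧ M * M = M ∧
    (∀ x : Fin r → ℝ, (M *ᵥ x) ⬝ᵥ (fun _ => (1 : ℝ)) = 0) ∧
    (∀ u : Fin r → ℝ, u ⬝ᵥ (fun _ => (1 : ℝ)) = 0 → M *ᵥ u = u) := by
  set d : Matrix (Fin r) (Fin r) ℝ := Matrix.diagonal (fun j => (p j)⁻¹) with hd_def
  set M := S * d * S with hM_def
  have hS : Sᵀ = S := by
    have := hSpsd.1
    simpa [Matrix.IsHermitian] using this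
  set ones : Fin r → ℝ := fun _ => (1 : ℝ) with hones_def
  -- Σ annihilates the ones vector
  have hSig1 : (Matrix.diagonal p - Matrix.vecMulVec p p) *ᵥ ones = 0 := by
    funext i
    simp [sub_mulVec, mulVec, dotProduct, diagonal, vecMulVec_apply, Finset.sum_ite_eq,
      ← Finset.mul_sum, hsum, hones_def]
  -- S annihilates the ones vector
  have hS1 : S *ᵥ ones = 0 := by
    have h0 : (S *ᵥ ones) ⬝ᵥ (S *ᵥ ones) = 0 := by
      rw [dotProduct_mulVec, ← mulVec_transpose, hS, mulVec_mulVec, hSsq, hSig1, zero_dotProduct]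
    exact dotProduct_self_eq_zero.mp h0
  -- d * Σ = 1 - vecMulVec ones p
  have hinv : (fun i => (p i)⁻¹ * p i) = ones := by
    funext i; exact inv_mul_cancel₀ (hp i).ne'
  have hdSig : d * (Matrix.diagonal p - Matrix.vecMulVec p p) = 1 - vecMulVec ones p := by
    rw [Matrix.mul_sub, hd_def, diagonal_mul_diagonal, aux_diagonal_mul_vecMulVec, hinv]
    congr 1
  -- key identity : S * d * S * S = S
  have hkey : S * d * S * S = S := by
    rw [Matrix.mul_assoc (S * d), Matrix.mul_assoc S d, hSsq, hdSig, Matrix.mul_sub,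
      Matrix.mul_one, aux_mul_vecMulVec, hS1]
    have h0 : vecMulVec (0 : Fin r → ℝ) p = 0 := by ext i j; simp [vecMulVec_apply]
    rw [h0, sub_zero]
  -- symmetry
  have hMsym : M.IsSymm := by
    show Mᵀ = M
    show (S * d * S)ᵀ = S * d * S
    rw [transpose_mul, transpose_mul, hS, hd_def, diagonal_transpose, Matrix.mul_assoc]
  have hM1 : M *ᵥ ones = 0 := by
    show (S * d * S) *ᵥ ones = 0
    rw [← mulVec_mulVec, hS1]
    simp
  refine ⟨hMsym, ?_, ?_, ?_⟩
  · -- idempotence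
    show (S * d * S) * (S * d * S) = S * d * S
    calc (S * d * S) * (S * d * S) = (S * d * S * S) * (d * S) := by
          simp only [Matrix.mul_assoc]
      _ = S * (d * S) := by rw [hkey]
      _ = S * d * S := by rw [Matrix.mul_assoc]
  · intro x
    calc (M *ᵥ x) ⬝ᵥ ones = ones ⬝ᵥ (M *ᵥ x) := dotProduct_comm _ _
      _ = (ones ᵥ* M) ⬝ᵥ x := dotProduct_mulVec _ _ _
      _ = (Mᵀ *ᵥ ones) ⬝ᵥ x := by rw [mulVec_transpose]
      _ = (M *ᵥ ones) ⬝ᵥ x := by rw [hMsym]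
      _ = 0 := by rw [hM1, zero_dotProduct]
  · -- projection onto orthogonal complement of ones
    intro u hu
    -- u is in range of S
    have hones_ne : ones ≠ 0 := by
      intro h
      have := congrFun h ⟨0, hr⟩
      norm_num [hones_def] at this
    have hker : LinearMap.ker S.mulVecLin = Submodule.span ℝ {ones} := by
      apply le_antisymm
      · intro v hv
        have hv0 : S *ᵥ v = 0 := hv
        have hSigv : (Matrix.diagonal p - Matrix.vecMulVec p p) *ᵥ v = 0 := by
          rw [← hSsq, ← mulVec_mulVec, hv0]
          simp
        have hvconst : ∀ i, v i = p ⬝ᵥ v := by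
          intro i
          have hxi := congrFun hSigv i
          have hx2 : p i * v i - p i * (p ⬝ᵥ v) = 0 := by
            simpa [sub_mulVec, mulVec, dotProduct, diagonal, vecMulVec_apply, sub_mul,
              Finset.sum_sub_distrib, ite_mul, zero_mul, Finset.sum_ite_eq,
              ← Finset.mul_sum, mul_assoc] using hxi
          exact mul_left_cancel₀ (hp i).ne' (sub_eq_zero.mp hx2)
        have : v = (p ⬝ᵥ v) • ones := by
          funext i
          simp [hones_def, hvconst i]
        rw [this]
        exact Submodule.smul_mem _ _ (Submodule.mem_span_singleton_self _)
      · rw [Submodule.span_le, Set.singleton_subset_iff]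
        exact hS1
    -- the functional x ↦ x ⬝ᵥ ones
    let g : (Fin r → ℝ) →ₗ[ℝ] ℝ :=
      { toFun := fun v => v ⬝ᵥ ones
        map_add' := fun a b => add_dotProduct a b ones
        map_smul' := fun c a => smul_dotProduct c a ones }
    have hrne : (r : ℝ) ≠ 0 := by positivity
    have hg_surj : Function.Surjective g := by
      intro c
      refine ⟨(c / r) • ones, ?_⟩
      simp [g, smul_dotProduct, dotProduct, hones_def, Finset.sum_const, div_mul_eq_mul_div,
        div_eq_iff hrne]
    have hfinfun : Module.finrank ℝ (Fin r → ℝ) = r := Module.finrank_fin_fun ℝ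
    have hkerf : Module.finrank ℝ (LinearMap.ker S.mulVecLin) = 1 := by
      rw [hker]; exact finrank_span_singleton hones_ne
    have hrn1 := LinearMap.finrank_range_add_finrank_ker S.mulVecLin
    have hrn2 := LinearMap.finrank_range_add_finrank_ker g
    have hgrange : LinearMap.range g = ⊤ := LinearMap.range_eq_top.mpr hg_surj
    have hgr1 : Module.finrank ℝ (LinearMap.range g) = 1 := by
      rw [hgrange]; simpa using Module.finrank_self ℝ
    have hle : LinearMap.range S.mulVecLin ≤ LinearMap.ker g := by
      rintro _ ⟨v, rfl⟩
      show (S *ᵥ v) ⬝ᵥ ones = 0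
      calc (S *ᵥ v) ⬝ᵥ ones = ones ⬝ᵥ (S *ᵥ v) := dotProduct_comm _ _
        _ = (ones ᵥ* S) ⬝ᵥ v := dotProduct_mulVec _ _ _
        _ = (Sᵀ *ᵥ ones) ⬝ᵥ v := by rw [mulVec_transpose]
        _ = 0 := by rw [hS, hS1, zero_dotProduct]
    have heq : LinearMap.range S.mulVecLin = LinearMap.ker g := by
      apply Submodule.eq_of_le_of_finrank_eq hle
      rw [hfinfun, hkerf] at hrn1
      rw [hfinfun, hgr1] at hrn2
      omega
    have hu' : u ∈ LinearMap.ker g := hu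
    rw [← heq] at hu'
    obtain ⟨v, rfl⟩ := hu'
    show M *ᵥ (S *ᵥ v) = S *ᵥ v
    show (S * d * S) *ᵥ (S *ᵥ v) = S *ᵥ v
    rw [mulVec_mulVec, hkey]
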